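/- Let (T₀,T₁) be a pair of nonzero complex polynomials and let (y₀,y₁) lie in a population of critical points corresponding to (T₀,T₁). Let y₀^{[0]} and y₁^{[1]} be polynomials with Wr(y₀,y₀^{[0]}) = T₀·y₁² and Wr(y₁,y₁^{[1]}) = T₁·y₀². Let f₀, f₁ be nonzero rational functions over ℂ such that f₀·y₀, f₁·y₁, f₀·y₀^{[0]}, f₁·y₁^{[1]}, T₀·f₀²/f₁², and T₁·f₁²/f₀² are all polynomials. Then the pair (f₀·y₀, f₁·y₁) is fertile with respect to (T₀·f₀²/f₁², T₁·f₁²/f₀²). -/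

import Mathlib

open Polynomial

noncomputable section

/-- The Wronskian of two polynomials: `Wr(f,g) = f·g′ − f′·g`. -/
def pWr (f g : ℂ[X]) : ℂ[X] := f * derivative g - derivative f * g

/-- A pair `y = (y₀,y₁)` of nonzero polynomials is fertile with respect to a pair
`T = (T₀,T₁)` if there exist `ỹ₀, ỹ₁` with `Wr(y₀,ỹ₀) = T₀·y₁²` and `Wr(y₁,ỹ₁) = T₁·y₀²`. -/
def Fertile (T y : ℂ[X] × ℂ[X]) : Prop :=
  y.1 ≠ 0 ∧ y.2 ≠ 0 ∧
  ∃ ty0 ty1 : ℂ[X], pWr y.1 ty0 = T.1 * y.2 ^ 2 ∧ pWr y.2 ty1 = T.2 * y.1 ^ 2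

/-- Reproduction in direction 0: replace `(y₀,y₁)` by `(ỹ₀,y₁)` with `Wr(y₀,ỹ₀) = T₀·y₁²`. -/
def Reprod0 (T y z : ℂ[X] × ℂ[X]) : Prop :=
  z.2 = y.2 ∧ pWr y.1 z.1 = T.1 * y.2 ^ 2

/-- Reproduction in direction 1: replace `(y₀,y₁)` by `(y₀,ỹ₁)` with `Wr(y₁,ỹ₁) = T₁·y₀²`. -/
def Reprod1 (T y z : ℂ[X] × ℂ[X]) : Prop :=
  z.1 = y.1 ∧ pWr y.2 z.2 = T.2 * y.1 ^ 2

/-- Reproduction (in either direction). -/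
def Reprod (T y z : ℂ[X] × ℂ[X]) : Prop := Reprod0 T y z ∨ Reprod1 T y z

/-- A pair is super-fertile w.r.t. `T` if every pair obtained from it by a finite (possibly
empty) sequence of reproductions w.r.t. `T` is fertile w.r.t. `T`. -/
def SuperFertile (T y : ℂ[X] × ℂ[X]) : Prop :=
  ∀ z, Relation.ReflTransGen (Reprod T) y z → Fertile T z

/-- A pair `(y₀,y₁)` is generic w.r.t. `(T₀,T₁)`: `y₀,y₁` squarefree, coprime to each other,
and `yᵢ` coprime with `Tᵢ`. -/
def Generic (T y : ℂ[X] × ℂ[X]) : Prop :=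
  Squarefree y.1 ∧ Squarefree y.2 ∧ IsCoprime y.1 y.2 ∧
    IsCoprime y.1 T.1 ∧ IsCoprime y.2 T.2

/-- A pair represents a critical point w.r.t. `T` if it is generic and fertile w.r.t. `T`. -/
def IsCriticalPt (T y : ℂ[X] × ℂ[X]) : Prop := Generic T y ∧ Fertile T y

/-- A pair lies in a population of critical points corresponding to `T` if it is obtained by a
finite (possibly empty) sequence of reproductions from a pair representing a critical point. -/
def InPopulation (T y : ℂ[X] × ℂ[X]) : Prop :=
  ∃ y₀, IsCriticalPt T y₀ ∧ Relation.ReflTransGen (Reprod T) y₀ y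


/-!
Multiplying both entries of a Wronskian by the same rational function `f` multiplies it by `f²`.
Hence `Wr(f₀y₀, f₀ỹ₀) = f₀²·T₀·y₁² = (T₀f₀²/f₁²)·(f₁y₁)²`, and symmetrically in direction 1;
the only other input is that `y₀, y₁ ≠ 0`, which holds at a critical point and is preserved by
reproductions because `T₀, T₁ ≠ 0`.
-/

open Polynomial

lemma pWr_zero_right (f : ℂ[X]) : pWr f 0 = 0 := by
  simp [pWr]

lemma pWr_mul_mul (c f g : ℂ[X]) : pWr (c * f) (c * g) = c ^ 2 * pWr f g := by
  simp only [pWr, derivative_mul]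
  ring

lemma Reprod.ne_zero {T y z : ℂ[X] × ℂ[X]} (hT0 : T.1 ≠ 0) (hT1 : T.2 ≠ 0)
    (hy : y.1 ≠ 0 ∧ y.2 ≠ 0) (h : Reprod T y z) : z.1 ≠ 0 ∧ z.2 ≠ 0 := by
  rcases h with ⟨h2, hw⟩ | ⟨h1, hw⟩
  · refine ⟨fun h0 => ?_, h2 ▸ hy.2⟩
    rw [h0, pWr_zero_right] at hw
    exact mul_ne_zero hT0 (pow_ne_zero 2 hy.2) hw.symm
  · refine ⟨h1 ▸ hy.1, fun h0 => ?_⟩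
    rw [h0, pWr_zero_right] at hw
    exact mul_ne_zero hT1 (pow_ne_zero 2 hy.1) hw.symm

lemma InPopulation.ne_zero {T y : ℂ[X] × ℂ[X]} (hT0 : T.1 ≠ 0) (hT1 : T.2 ≠ 0)
    (hy : InPopulation T y) : y.1 ≠ 0 ∧ y.2 ≠ 0 := by
  obtain ⟨x, ⟨-, hx0, hx1, -⟩, hxy⟩ := hy
  induction hxy with
  | refl => exact ⟨hx0, hx1⟩
  | tail _ hstep ih => exact hstep.ne_zero hT0 hT1 ih

section RatFunc

variable {K : Type*} [Field K]

local notation "↑ₚ" => algebraMap K[X] (RatFunc K)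

lemma RatFunc.mul_algebraMap_denom (f : RatFunc K) : f * ↑ₚ f.denom = ↑ₚ f.num := by
  conv_lhs => arg 1; rw [← f.num_div_denom]
  exact div_mul_cancel₀ _ (RatFunc.algebraMap_ne_zero f.denom_ne_zero)

lemma RatFunc.denom_mul_eq_num_mul_of_algebraMap_eq {f : RatFunc K} {p y : K[X]}
    (hp : ↑ₚ p = f * ↑ₚ y) : f.denom * p = f.num * y := by
  apply RatFunc.algebraMap_injective K
  rw [map_mul, map_mul, hp, ← f.mul_algebraMap_denom]
  ring

lemma ne_zero_of_algebraMap_eq_mul {f : RatFunc K} (hf : f ≠ 0) {p y : K[X]} (hy : y ≠ 0)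
    (hp : ↑ₚ p = f * ↑ₚ y) : p ≠ 0 := by
  rintro rfl
  rw [map_zero, eq_comm, mul_eq_zero] at hp
  exact hp.elim hf (RatFunc.algebraMap_ne_zero hy)

end RatFunc

section Rescale

local notation "↑ₚ" => algebraMap ℂ[X] (RatFunc ℂ)

lemma algebraMap_pWr_of_algebraMap_eq_mul {f : RatFunc ℂ} {y t p q : ℂ[X]}
    (hp : ↑ₚ p = f * ↑ₚ y) (hq : ↑ₚ q = f * ↑ₚ t) :
    ↑ₚ (pWr p q) = f ^ 2 * ↑ₚ (pWr y t) := by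
  have hpoly : f.denom ^ 2 * pWr p q = f.num ^ 2 * pWr y t := by
    rw [← pWr_mul_mul, ← pWr_mul_mul, RatFunc.denom_mul_eq_num_mul_of_algebraMap_eq hp,
      RatFunc.denom_mul_eq_num_mul_of_algebraMap_eq hq]
  have hden : ↑ₚ f.denom ^ 2 ≠ 0 := pow_ne_zero 2 (RatFunc.algebraMap_ne_zero f.denom_ne_zero)
  refine mul_left_cancel₀ hden ?_
  calc ↑ₚ f.denom ^ 2 * ↑ₚ (pWr p q) = ↑ₚ (f.num ^ 2 * pWr y t) := by
        rw [← hpoly, map_mul, map_pow]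
    _ = ↑ₚ f.denom ^ 2 * (f ^ 2 * ↑ₚ (pWr y t)) := by
        rw [map_mul, map_pow, ← f.mul_algebraMap_denom]
        ring

lemma pWr_eq_of_rescale {f g : RatFunc ℂ} (hg : g ≠ 0) {T S y t z p q r : ℂ[X]}
    (hw : pWr y t = T * z ^ 2) (hp : ↑ₚ p = f * ↑ₚ y) (hq : ↑ₚ q = f * ↑ₚ t)
    (hr : ↑ₚ r = g * ↑ₚ z) (hS : ↑ₚ S = ↑ₚ T * f ^ 2 / g ^ 2) :
    pWr p q = S * r ^ 2 := by
  apply RatFunc.algebraMap_injective ℂ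
  rw [algebraMap_pWr_of_algebraMap_eq_mul hp hq, hw, map_mul, map_mul, map_pow, map_pow, hS, hr]
  field_simp

end Rescale

/-- Dividing a point of a population (and witnesses of its reproductions) by rational
functions `f₀, f₁`, so that all the displayed products and the modified `T`'s are
polynomials, produces a fertile pair. -/
theorem divide_population_fertile (T0 T1 y0 y1 ty0 ty1 : ℂ[X])
    (hT0 : T0 ≠ 0) (hT1 : T1 ≠ 0)
    (hpop : InPopulation (T0, T1) (y0, y1))
    (hw0 : pWr y0 ty0 = T0 * y1 ^ 2) (hw1 : pWr y1 ty1 = T1 * y0 ^ 2)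
    (f0 f1 : RatFunc ℂ) (hf0 : f0 ≠ 0) (hf1 : f1 ≠ 0)
    (p0 p1 q0 q1 S0 S1 : ℂ[X])
    (hp0 : algebraMap ℂ[X] (RatFunc ℂ) p0 = f0 * algebraMap ℂ[X] (RatFunc ℂ) y0)
    (hp1 : algebraMap ℂ[X] (RatFunc ℂ) p1 = f1 * algebraMap ℂ[X] (RatFunc ℂ) y1)
    (hq0 : algebraMap ℂ[X] (RatFunc ℂ) q0 = f0 * algebraMap ℂ[X] (RatFunc ℂ) ty0)
    (hq1 : algebraMap ℂ[X] (RatFunc ℂ) q1 = f1 * algebraMap ℂ[X] (RatFunc ℂ) ty1)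
    (hS0 : algebraMap ℂ[X] (RatFunc ℂ) S0 =
      algebraMap ℂ[X] (RatFunc ℂ) T0 * f0 ^ 2 / f1 ^ 2)
    (hS1 : algebraMap ℂ[X] (RatFunc ℂ) S1 =
      algebraMap ℂ[X] (RatFunc ℂ) T1 * f1 ^ 2 / f0 ^ 2) :
    Fertile (S0, S1) (p0, p1) := by
  obtain ⟨hy0, hy1⟩ := hpop.ne_zero hT0 hT1
  exact ⟨ne_zero_of_algebraMap_eq_mul hf0 hy0 hp0, ne_zero_of_algebraMap_eq_mul hf1 hy1 hp1,
    q0, q1, pWr_eq_of_rescale hf1 hw0 hp0 hq0 hp1 hS0, pWr_eq_of_rescale hf0 hw1 hp1 hq1 hp0 hS1⟩
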